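/- Let (b_n)_{n≥0} be positive, {s} = b_{s-1}^2/b_0^2, {n}! = {n}{n-1}⋯{1}, and let α_{2m-1,n-1} be the nested-sum coefficients defined by α_{-1,n-1}=1 and α_{2m-1,n-1} = Σ_{k_1=2m-1}^{n-1}{k_1} Σ_{k_2=2m-3}^{k_1-2}{k_2} ⋯ Σ_{k_m=1}^{k_{m-1}-2}{k_m}. Then the polynomials Ψ_n(x) = Σ_{m=0}^{⌊n/2⌋} ((-1)^m / √({n}!)) α_{2m-1,n-1} b_0^{2m-n} x^{n-2m} satisfy the three-term recurrence b_n Ψ_{n+1}(x) + b_{n-1} Ψ_{n-1}(x) = x Ψ_n(x) with Ψ_0 = 1, Ψ_{-1} = 0. -/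

import Mathlib

/-- `jacobiAlpha br m N` is the coefficient `α_{2m-1, N}` given by the nested sums,
with `α_{-1,N} = 1` (the case `m = 0`); `br s` stands for `{s} = b_{s-1}²/b₀²`. -/
def jacobiAlpha (br : ℕ → ℝ) : ℕ → ℕ → ℝ
  | 0, _ => 1
  | m + 1, N => ∑ k ∈ Finset.Icc (2 * (m + 1) - 1) N, br k * jacobiAlpha br m (k - 2)

/-- `braceFact br n = {n}! = {n}{n-1}⋯{1}` (with `{0}! = 1`). -/
def braceFact (br : ℕ → ℝ) (n : ℕ) : ℝ := ∏ s ∈ Finset.Icc 1 n, br s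

/-!
Write `Ψ_n = P_n / (b₀ⁿ √{n}!)` with `P_n(x) = Σ_m (-1)^m α_{2m-1,n-1} b₀^{2m} x^{n-2m}`.
Because `b₀ⁿ⁺¹ √{n+1}! = b_n · b₀ⁿ √{n}!`, the recurrence for `Ψ` becomes the monic recurrence
`P_{n+2} = x P_{n+1} - b_n² P_n`. Since `b_n² = b₀² {n+1}`, comparing the coefficients of
`x^{n+2-2m}` reduces the monic recurrence to `α_{2m+1,n+1} = α_{2m+1,n} + {n+1} α_{2m-1,n-1}`,
which splits off the top term of the outer nested sum.
-/

open Finset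

namespace jacobiAlpha

variable (c : ℕ → ℝ)

theorem eq_zero_of_lt {m N : ℕ} (h : N + 1 < 2 * m) : jacobiAlpha c m N = 0 := by
  obtain ⟨m, rfl⟩ : ∃ k, m = k + 1 := Nat.exists_eq_succ_of_ne_zero (by omega)
  rw [jacobiAlpha, Icc_eq_empty (by omega), sum_empty]

theorem succ_succ (m N : ℕ) :
    jacobiAlpha c (m + 1) (N + 1) =
      jacobiAlpha c (m + 1) N + c (N + 1) * jacobiAlpha c m (N - 1) := by
  rcases le_or_gt (2 * (m + 1) - 1) (N + 1) with h | h
  · rw [jacobiAlpha, sum_Icc_succ_top h, ← jacobiAlpha, Nat.add_sub_add_right N 1 1]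
  · rw [eq_zero_of_lt c (by omega : N + 1 + 1 < 2 * (m + 1)),
      eq_zero_of_lt c (by omega : N + 1 < 2 * (m + 1)),
      eq_zero_of_lt c (by omega : N - 1 + 1 < 2 * m), mul_zero, add_zero]

end jacobiAlpha

def jacobiMonic (c : ℕ → ℝ) (y : ℝ) (n : ℕ) (x : ℝ) : ℝ :=
  ∑ m ∈ range (n / 2 + 1), (-1) ^ m * jacobiAlpha c m (n - 1) * y ^ m * x ^ (n - 2 * m)

namespace jacobiMonic

variable (c : ℕ → ℝ) (y x : ℝ)

theorem zero : jacobiMonic c y 0 x = 1 := by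
  simp [jacobiMonic, jacobiAlpha]

theorem one : jacobiMonic c y 1 x = x := by
  simp [jacobiMonic, jacobiAlpha]

theorem succ_succ (n : ℕ) :
    jacobiMonic c y (n + 2) x =
      x * jacobiMonic c y (n + 1) x - y * c (n + 1) * jacobiMonic c y n x := by
  set f : ℕ → ℕ → ℝ := fun k m => (-1) ^ m * jacobiAlpha c m (k - 1) * y ^ m * x ^ (k - 2 * m)
  have hf_zero (k : ℕ) : f k 0 = x ^ k := by simp [f, jacobiAlpha]
  have hx_mul (m : ℕ) :
      x * f (n + 1) (m + 1) =
        (-1) ^ (m + 1) * jacobiAlpha c (m + 1) n * y ^ (m + 1) * x ^ (n - 2 * m) := by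
    rcases lt_or_ge (2 * m) n with h | h
    · simp only [f, Nat.add_sub_cancel]
      rw [show n - 2 * m = n + 1 - 2 * (m + 1) + 1 by omega, pow_succ]
      ring
    · simp only [f, Nat.add_sub_cancel,
        jacobiAlpha.eq_zero_of_lt c (by omega : n + 1 < 2 * (m + 1))]
      ring
  have hterm (m : ℕ) : f (n + 2) (m + 1) = x * f (n + 1) (m + 1) - y * c (n + 1) * f n m := by
    rw [hx_mul]
    simp only [f, show n + 2 - 1 = n + 1 by omega, jacobiAlpha.succ_succ,
      show n + 2 - 2 * (m + 1) = n - 2 * m by omega]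
    ring
  have hextend : jacobiMonic c y (n + 1) x = ∑ m ∈ range (n / 2 + 2), f (n + 1) m := by
    refine sum_subset (range_subset_range.2 (by omega)) fun m _ hm => ?_
    simp only [mem_range, not_lt] at hm
    simp only [Nat.add_sub_cancel, jacobiAlpha.eq_zero_of_lt c (by omega : n + 1 < 2 * m)]
    ring
  have hn2 : jacobiMonic c y (n + 2) x = ∑ m ∈ range (n / 2 + 2), f (n + 2) m := by
    rw [jacobiMonic, show (n + 2) / 2 + 1 = n / 2 + 2 by omega]
  rw [hn2, hextend, jacobiMonic, sum_range_succ', sum_range_succ' _ (n / 2 + 1)]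
  simp only [hterm, sum_sub_distrib, hf_zero, mul_add, mul_sum]
  ring

end jacobiMonic

theorem braceFact_succ (c : ℕ → ℝ) (n : ℕ) : braceFact c (n + 1) = braceFact c n * c (n + 1) :=
  prod_Icc_succ_top (Nat.le_add_left 1 n) c

theorem braceFact_pos {c : ℕ → ℝ} (hc : ∀ s, 0 < c s) (n : ℕ) : 0 < braceFact c n :=
  prod_pos fun s _ => hc s

section Normalization

variable {b br : ℕ → ℝ} (hb : ∀ n, 0 < b n) (hbr : ∀ s : ℕ, br s = b (s - 1) ^ 2 / b 0 ^ 2)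
include hb hbr

theorem pow_mul_sqrt_braceFact_pos (n : ℕ) : 0 < b 0 ^ n * √(braceFact br n) := by
  have hbr_pos (s : ℕ) : 0 < br s := by
    have := hb (s - 1); have := hb 0
    rw [hbr]; positivity
  have := hb 0
  have := braceFact_pos hbr_pos n
  positivity

theorem pow_mul_sqrt_braceFact_succ (n : ℕ) :
    b 0 ^ (n + 1) * √(braceFact br (n + 1)) = b 0 ^ n * √(braceFact br n) * b n := by
  have hsqrt : √(br (n + 1)) = b n / b 0 := by
    rw [hbr, Nat.add_sub_cancel, ← div_pow, Real.sqrt_sq (div_pos (hb n) (hb 0)).le]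
  rw [braceFact_succ, Real.sqrt_mul' _ (by rw [hbr]; positivity), hsqrt]
  field_simp [(hb 0).ne']
  ring

end Normalization

/-- The explicit polynomials
`Ψ_n(x) = Σ_{m=0}^{⌊n/2⌋} ((-1)^m / √({n}!)) α_{2m-1,n-1} b₀^{2m-n} x^{n-2m}`
satisfy the three-term recurrence `b_n Ψ_{n+1} + b_{n-1} Ψ_{n-1} = x Ψ_n`, `Ψ₀ = 1`. -/
theorem stmt_6 (b : ℕ → ℝ) (hb : ∀ n, 0 < b n)
    (br : ℕ → ℝ) (hbr : ∀ s : ℕ, br s = (b (s - 1)) ^ 2 / (b 0) ^ 2)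
    (Ψ : ℕ → ℝ → ℝ)
    (hΨ : ∀ (n : ℕ) (x : ℝ),
      Ψ n x = ∑ m ∈ Finset.range (n / 2 + 1),
        ((-1 : ℝ) ^ m / Real.sqrt (braceFact br n)) * jacobiAlpha br m (n - 1) *
          ((b 0) ^ (2 * m) / (b 0) ^ n) * x ^ (n - 2 * m)) :
    (∀ x : ℝ, Ψ 0 x = 1) ∧
    (∀ x : ℝ, b 0 * Ψ 1 x = x * Ψ 0 x) ∧
    (∀ (n : ℕ) (x : ℝ),
      b (n + 1) * Ψ (n + 2) x + b n * Ψ n x = x * Ψ (n + 1) x) := by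
  set d : ℕ → ℝ := fun n => b 0 ^ n * √(braceFact br n)
  have hd_pos (n : ℕ) : 0 < d n := pow_mul_sqrt_braceFact_pos hb hbr n
  have hd_succ (n : ℕ) : d (n + 1) = d n * b n := pow_mul_sqrt_braceFact_succ hb hbr n
  have hΨ_monic (n : ℕ) (x : ℝ) : Ψ n x = jacobiMonic br (b 0 ^ 2) n x / d n := by
    rw [hΨ, jacobiMonic, sum_div]
    refine sum_congr rfl fun m _ => ?_
    rw [pow_mul]
    ring
  have hb_sq (n : ℕ) : b 0 ^ 2 * br (n + 1) = b n ^ 2 := by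
    rw [hbr, Nat.add_sub_cancel]
    field_simp [(hb 0).ne']
  have hd0 : d 0 = 1 := by simp [d, braceFact]
  refine ⟨fun x => ?_, fun x => ?_, fun n x => ?_⟩
  · rw [hΨ_monic, jacobiMonic.zero, hd0, div_one]
  · rw [hΨ_monic, hΨ_monic, jacobiMonic.zero, jacobiMonic.one, hd_succ, hd0]
    field_simp [(hb 0).ne']
  · rw [hΨ_monic, hΨ_monic, hΨ_monic, jacobiMonic.succ_succ, hd_succ, hd_succ, hb_sq]
    field_simp [(hd_pos n).ne', (hb n).ne', (hb (n + 1)).ne']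
    ring
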